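/- arXiv:2201.12487 — 3 statements merged into one kernel-verified Lean document; each statement's English description precedes it below -/
import Mathlib

section
/- Let d ≥ 1 and J ≥ 1, let x_1, …, x_J ∈ ℝ^d be a counterfactual plan, and let Θ = {θ ∈ ℝ^d : x_j^⊤θ ≥ 0 for all j ∈ [J]}. Fix ρ ≥ 0, μ̂ ∈ ℝ^d and a symmetric positive semidefinite matrix Σ̂ ∈ ℝ^{d×d}. Let U⋆ be the optimal value of the semidefinite program: infimum of z₀ + γ(ρ² − ‖μ̂‖₂² − Tr(Σ̂)) + q + Tr(Q) over variables γ ≥ 0, z₀ ∈ ℝ, z ∈ ℝ^d, Z symmetric positive semidefinite, q ≥ 0, Q symmetric positive semidefinite, λ ∈ ℝ₊^J, subject to: (a) the block matrix [[γI − Z, γΣ̂^{1/2}],[γΣ̂^{1/2}, Q]] is positive semidefinite; (b) [[γI − Z, γμ̂ + z],[(γμ̂ + z)^⊤, q]] is positive semidefinite; (c) [[Z, z],[z^⊤, z₀]] is positive semidefinite; and (d) [[Z, z],[z^⊤, z₀ − 1]] ⪰ Σ_{j∈[J]} λ_j [[0, x_j/2],[x_j^⊤/2, 0]] in the Loewner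 order. Then sup_{Q ∈ 𝔹} Q(θ̃ ∈ Θ) ≤ U⋆, where 𝔹 is the set of Borel probability measures Q on ℝ^d whose mean vector μ and covariance matrix Σ exist and satisfy 𝔾((μ, Σ), (μ̂, Σ̂)) ≤ ρ. -/
open MeasureTheory Matrix Classical

noncomputable section

/-- Positive semidefinite square root of a matrix (junk value `0` if not PSD). -/
noncomputable def matSqrt {d : ℕ} (A : Matrix (Fin d) (Fin d) ℝ) : Matrix (Fin d) (Fin d) ℝ :=
  if h : A.PosSemidef then
    (h.1.eigenvectorUnitary : Matrix (Fin d) (Fin d) ℝ) *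
      diagonal (fun i => Real.sqrt (h.1.eigenvalues i)) *
      (star h.1.eigenvectorUnitary : Matrix (Fin d) (Fin d) ℝ)
  else 0

/-- Euclidean norm on `Fin d → ℝ`. -/
noncomputable def euclNorm {d : ℕ} (v : Fin d → ℝ) : ℝ := Real.sqrt (∑ i, (v i) ^ 2)

/-- Gelbrich distance between two mean–covariance pairs. -/
noncomputable def gelbrich {d : ℕ} (μ₁ : Fin d → ℝ) (S₁ : Matrix (Fin d) (Fin d) ℝ)
    (μ₂ : Fin d → ℝ) (S₂ : Matrix (Fin d) (Fin d) ℝ) : ℝ :=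
  Real.sqrt ((∑ i, (μ₁ i - μ₂ i) ^ 2) +
    (S₁ + S₂ - (2 : ℝ) • matSqrt (matSqrt S₂ * S₁ * matSqrt S₂)).trace)

/-- The symmetric block matrix `[[Z, z], [zᵀ, c]]`. -/
def blk {d : ℕ} (Z : Matrix (Fin d) (Fin d) ℝ) (z : Fin d → ℝ) (c : ℝ) :
    Matrix (Fin d ⊕ Unit) (Fin d ⊕ Unit) ℝ :=
  Matrix.of fun p q =>
    match p, q with
    | Sum.inl i, Sum.inl j => Z i j
    | Sum.inl i, Sum.inr _ => z i
    | Sum.inr _, Sum.inl j => z j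
    | Sum.inr _, Sum.inr _ => c

/-- The block matrix `[[A, B], [C, D]]` with four `d × d` blocks. -/
def blk2 {d : ℕ} (A B C D : Matrix (Fin d) (Fin d) ℝ) :
    Matrix (Fin d ⊕ Fin d) (Fin d ⊕ Fin d) ℝ :=
  Matrix.fromBlocks A B C D

/-- Set of favorable parameters `Θ({x_j}) = {θ : x_jᵀθ ≥ 0 ∀ j}`. -/
def favSet {d J : ℕ} (x : Fin J → Fin d → ℝ) : Set (Fin d → ℝ) :=
  { θ | ∀ j, 0 ≤ x j ⬝ᵥ θ }

/-- `Q` has mean vector `μ`: every coordinate is integrable with the prescribed integral. -/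
def hasMean {d : ℕ} (Q : Measure (Fin d → ℝ)) (μ : Fin d → ℝ) : Prop :=
  ∀ i, Integrable (fun θ => θ i) Q ∧ ∫ θ, θ i ∂Q = μ i

/-- `Q` has covariance matrix `S` around the mean `μ`. -/
def hasCov {d : ℕ} (Q : Measure (Fin d → ℝ)) (μ : Fin d → ℝ)
    (S : Matrix (Fin d) (Fin d) ℝ) : Prop :=
  ∀ i j, Integrable (fun θ => (θ i - μ i) * (θ j - μ j)) Q ∧
    ∫ θ, (θ i - μ i) * (θ j - μ j) ∂Q = S i j

/-- Membership in the ambiguity set `𝔹`: `Q` is a Borel probability measure whose mean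
vector `μ` and covariance matrix `S` exist and satisfy `𝔾((μ, S), (μ̂, Σ̂)) ≤ ρ`. -/
def inAmbiguity {d : ℕ} (μhat : Fin d → ℝ) (Shat : Matrix (Fin d) (Fin d) ℝ) (ρ : ℝ)
    (Q : Measure (Fin d → ℝ)) : Prop :=
  IsProbabilityMeasure Q ∧
    ∃ (μ : Fin d → ℝ) (S : Matrix (Fin d) (Fin d) ℝ),
      S.PosSemidef ∧ hasMean Q μ ∧ hasCov Q μ S ∧ gelbrich μ S μhat Shat ≤ ρ

/-- Feasibility for the upper-bound semidefinite program of Theorem 2. -/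
def UFeas {d J : ℕ} (x : Fin J → Fin d → ℝ) (μhat : Fin d → ℝ)
    (Shat : Matrix (Fin d) (Fin d) ℝ)
    (γ z₀ : ℝ) (z : Fin d → ℝ) (Z : Matrix (Fin d) (Fin d) ℝ) (q : ℝ)
    (Qm : Matrix (Fin d) (Fin d) ℝ) (lam : Fin J → ℝ) : Prop :=
  0 ≤ γ ∧ Z.PosSemidef ∧ 0 ≤ q ∧ Qm.PosSemidef ∧ (∀ j, 0 ≤ lam j) ∧
  (blk2 (γ • (1 : Matrix (Fin d) (Fin d) ℝ) - Z) (γ • matSqrt Shat) (γ • matSqrt Shat)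
    Qm).PosSemidef ∧
  (blk (γ • (1 : Matrix (Fin d) (Fin d) ℝ) - Z) (γ • μhat + z) q).PosSemidef ∧
  (blk Z z z₀).PosSemidef ∧
  (blk Z z (z₀ - 1) - ∑ j, lam j • blk 0 ((1 / 2 : ℝ) • x j) 0).PosSemidef

/-- Optimal value `U⋆` of the upper-bound semidefinite program of Theorem 2. -/
noncomputable def Ustar {d J : ℕ} (x : Fin J → Fin d → ℝ) (μhat : Fin d → ℝ)
    (Shat : Matrix (Fin d) (Fin d) ℝ) (ρ : ℝ) : ℝ :=
  sInf { v | ∃ (γ z₀ : ℝ) (z : Fin d → ℝ) (Z : Matrix (Fin d) (Fin d) ℝ) (q : ℝ)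
      (Qm : Matrix (Fin d) (Fin d) ℝ) (lam : Fin J → ℝ),
      UFeas x μhat Shat γ z₀ z Z q Qm lam ∧
      v = z₀ + γ * (ρ ^ 2 - (∑ i, (μhat i) ^ 2) - Shat.trace) + q + Qm.trace }

/-! Every feasible point of the semidefinite program yields the quadratic
`f(θ) = θᵀZθ + 2zᵀθ + z₀`; constraint (c) makes `f ≥ 0` and constraint (d), an S-lemma
certificate with multipliers `λ`, makes `f ≥ 1` on `Θ`.  Markov's inequality then gives
`Q(Θ) ≤ 𝔼_Q f = Tr(ZΣ) + f(μ)` for every `Q` with mean `μ` and covariance `Σ`.  Constraint (b)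
bounds the mean part `f(μ) - z₀`, and constraint (a), tested against `Σ^{1/2}` and a contraction
attaining the trace norm of `Σ̂^{1/2} Σ^{1/2}`, bounds `Tr(ZΣ)` by
`γ (Tr Σ - 2 Tr (Σ̂^{1/2} Σ Σ̂^{1/2})^{1/2}) + Tr Qm`.  Adding up, `γ` times the Gelbrich
constraint turns the sum into the objective value. -/

open scoped MatrixOrder

namespace Matrix

variable {m n : Type*} [Fintype m] [Fintype n]

lemma PosSemidef.trace_mul_nonneg {A B : Matrix n n ℝ} (hA : A.PosSemidef) (hB : B.PosSemidef) :
    0 ≤ (A * B).trace := by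
  obtain ⟨C, rfl⟩ := CStarAlgebra.nonneg_iff_eq_star_mul_self.mp hA.nonneg
  rw [star_eq_conjTranspose, Matrix.mul_assoc, trace_mul_comm]
  simpa only [Matrix.mul_assoc] using (hB.mul_mul_conjTranspose_same C).trace_nonneg

lemma PosSemidef.two_mul_trace_le_of_fromBlocks {W C D : Matrix n n ℝ}
    (h : (fromBlocks W C Cᴴ D).PosSemidef) (X Y : Matrix n m ℝ) :
    2 * (Xᴴ * C * Y).trace ≤ (Xᴴ * W * X).trace + (Yᴴ * D * Y).trace := by
  have key := (h.conjTranspose_mul_mul_same (fromRows X (-Y))).trace_nonneg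
  rw [conjTranspose_fromRows_eq_fromCols_conjTranspose, fromCols_mul_fromBlocks,
    fromCols_mul_fromRows] at key
  have hsymm : (Yᴴ * Cᴴ * X).trace = (Xᴴ * C * Y).trace := by
    rw [← trace_transpose]
    simp [Matrix.mul_assoc]
  simp only [conjTranspose_neg, Matrix.neg_mul, Matrix.mul_neg, Matrix.add_mul, trace_add,
    trace_neg, hsymm] at key
  linarith

variable [DecidableEq n]

lemma PosSemidef.trace_conjTranspose_mul_mul_le {D G : Matrix n n ℝ} (hD : D.PosSemidef)
    (hG : (1 - G * Gᴴ).PosSemidef) : (Gᴴ * D * G).trace ≤ D.trace := by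
  have := hG.trace_mul_nonneg hD
  rw [Matrix.sub_mul, trace_sub, Matrix.one_mul] at this
  rw [trace_mul_cycle]
  linarith

lemma cfc_inv_sqrt_mul_self {M : Matrix n n ℝ} (hM : M.IsHermitian) :
    cfc (fun x => (√x)⁻¹) M * M = cfc Real.sqrt M := by
  have hM' : IsSelfAdjoint M := hM
  calc cfc (fun x => (√x)⁻¹) M * M = cfc (fun x => (√x)⁻¹) M * cfc (fun x => x) M := by
        rw [cfc_id' ℝ M]
    _ = cfc (fun x => (√x)⁻¹ * x) M :=
        (cfc_mul _ _ M (finite_real_spectrum.continuousOn _)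
          (finite_real_spectrum.continuousOn _)).symm
    _ = cfc Real.sqrt M := by simp only [inv_mul_eq_div, Real.div_sqrt]

lemma posSemidef_one_sub_cfc_inv_sqrt_mul_mul {M : Matrix n n ℝ} (hM : M.IsHermitian) :
    (1 - cfc (fun x => (√x)⁻¹) M * M * cfc (fun x => (√x)⁻¹) M).PosSemidef := by
  have hM' : IsSelfAdjoint M := hM
  rw [cfc_inv_sqrt_mul_self hM, ← cfc_mul _ _ M (finite_real_spectrum.continuousOn _)
    (finite_real_spectrum.continuousOn _), ← cfc_one ℝ M, ← cfc_sub _ _ M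
    (finite_real_spectrum.continuousOn _) (finite_real_spectrum.continuousOn _)]
  refine (cfc_nonneg fun x _ => ?_).posSemidef
  simp only [Pi.one_apply, sub_nonneg]
  exact mul_inv_le_one

/-- Writing `S = Rᴴ R`, the block constraint is tested against `[Rᴴ; -G]` with `G = T B Rᴴ`,
where `T` is the pseudo-inverse of `√(B S B)`: then `G Gᴴ` is the projection onto the range of
`B S B`, so `G` is a contraction, and `Tr (R B G) = Tr √(B S B)`. -/
lemma two_mul_trace_sqrt_le_of_fromBlocks {W B D S : Matrix n n ℝ} {γ : ℝ} (hB : B.IsHermitian)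
    (hS : S.PosSemidef) (h : (fromBlocks W (γ • B) (γ • B) D).PosSemidef) :
    2 * γ * (CFC.sqrt (B * S * B)).trace ≤ (W * S).trace + D.trace := by
  have hBSB : 0 ≤ B * S * B := by
    simpa only [hB.eq] using (hS.conjTranspose_mul_mul_same B).nonneg
  rw [CFC.sqrt_eq_real_sqrt _ hBSB, cfcₙ_eq_cfc]
  obtain ⟨R, rfl⟩ := CStarAlgebra.nonneg_iff_eq_star_mul_self.mp hS.nonneg
  rw [star_eq_conjTranspose] at hBSB ⊢
  set M := B * (Rᴴ * R) * B
  have hM : M.IsHermitian := hBSB.posSemidef.isHermitian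
  set T := cfc (fun x => (√x)⁻¹) M
  have hT : Tᴴ = T := (cfc_predicate (p := IsSelfAdjoint) _ M).star_eq
  set G := T * B * Rᴴ
  have hC : (γ • B)ᴴ = γ • B := by rw [conjTranspose_smul, hB.eq, star_trivial]
  have hblock := (show (fromBlocks W (γ • B) (γ • B)ᴴ D).PosSemidef by rwa [hC])
    |>.two_mul_trace_le_of_fromBlocks Rᴴ G
  have hcross : (Rᴴᴴ * (γ • B) * G).trace = γ * (T * M).trace := by
    rw [conjTranspose_conjTranspose, Matrix.mul_smul, Matrix.smul_mul, trace_smul, smul_eq_mul]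
    simp only [G, M, Matrix.mul_assoc]
    rw [trace_mul_comm R]
    simp only [Matrix.mul_assoc]
    rw [trace_mul_comm B]
    simp only [Matrix.mul_assoc]
  rw [cfc_inv_sqrt_mul_self hM] at hcross
  have hW : (Rᴴᴴ * W * Rᴴ).trace = (W * (Rᴴ * R)).trace := by
    rw [conjTranspose_conjTranspose, Matrix.mul_assoc, trace_mul_comm, Matrix.mul_assoc]
  have hGG : G * Gᴴ = T * M * T := by
    simp only [G, M, conjTranspose_mul, conjTranspose_conjTranspose, hT, hB.eq, Matrix.mul_assoc]
  have hD : D.PosSemidef := h.submatrix Sum.inr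
  have hE : (1 - G * Gᴴ).PosSemidef := by
    rw [hGG]
    exact posSemidef_one_sub_cfc_inv_sqrt_mul_mul hM
  have hGD := hD.trace_conjTranspose_mul_mul_le hE
  linarith

end Matrix

lemma matSqrt_eq_sqrt {d : ℕ} (A : Matrix (Fin d) (Fin d) ℝ) : matSqrt A = CFC.sqrt A := by
  by_cases hA : A.PosSemidef
  · rw [CFC.sqrt_eq_real_sqrt A hA.nonneg, cfcₙ_eq_cfc, matSqrt, dif_pos hA, hA.1.cfc_eq,
      IsHermitian.cfc, Unitary.conjStarAlgAut_apply]
    rfl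
  · rw [matSqrt, dif_neg hA, CFC.sqrt, cfcₙ_apply_of_not_predicate]
    exact fun h => hA h.posSemidef

lemma matSqrt_posSemidef {d : ℕ} (A : Matrix (Fin d) (Fin d) ℝ) : (matSqrt A).PosSemidef := by
  rw [matSqrt_eq_sqrt]
  exact (CFC.sqrt_nonneg A).posSemidef

lemma gelbrich_self {d : ℕ} (μ : Fin d → ℝ) {A : Matrix (Fin d) (Fin d) ℝ} (hA : A.PosSemidef) :
    gelbrich μ A μ A = 0 := by
  have hA' : 0 ≤ A := hA.nonneg
  have hsq : CFC.sqrt A * A * CFC.sqrt A = A * A := by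
    set s := CFC.sqrt A
    have hs : s * s = A := CFC.sqrt_mul_sqrt_self A
    rw [← hs]
    simp only [Matrix.mul_assoc]
  simp [gelbrich, matSqrt_eq_sqrt, hsq, CFC.sqrt_mul_self A, two_smul]

section Blocks

variable {d : ℕ}

lemma blk_quadForm (Z : Matrix (Fin d) (Fin d) ℝ) (z : Fin d → ℝ) (c : ℝ) (u : Fin d → ℝ) (t : ℝ) :
    Sum.elim u (fun _ => t) ⬝ᵥ blk Z z c *ᵥ Sum.elim u (fun _ => t)
      = u ⬝ᵥ Z *ᵥ u + 2 * t * (z ⬝ᵥ u) + c * t ^ 2 := by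
  simp only [dotProduct, mulVec, Fintype.sum_sum_type, blk, of_apply, Sum.elim_inl,
    Sum.elim_inr, Finset.univ_unique, Finset.sum_singleton, mul_add, Finset.sum_add_distrib,
    Finset.mul_sum]
  have hz : ∑ i, u i * (z i * t) = ∑ i, t * (z i * u i) :=
    Finset.sum_congr rfl fun _ _ => by ring
  rw [hz]
  simp only [← Finset.mul_sum]
  ring

lemma quadForm_nonneg_of_blk_posSemidef {Z : Matrix (Fin d) (Fin d) ℝ} {z : Fin d → ℝ} {c : ℝ}
    (h : (blk Z z c).PosSemidef) (u : Fin d → ℝ) (t : ℝ) :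
    0 ≤ u ⬝ᵥ Z *ᵥ u + 2 * t * (z ⬝ᵥ u) + c * t ^ 2 := by
  simpa [blk_quadForm] using h.dotProduct_mulVec_nonneg (Sum.elim u fun _ => t)

lemma blk_sub_sum_smul {J : ℕ} (Z : Matrix (Fin d) (Fin d) ℝ) (z : Fin d → ℝ) (c : ℝ)
    (lam : Fin J → ℝ) (y : Fin J → Fin d → ℝ) :
    blk Z z c - ∑ j, lam j • blk 0 (y j) 0 = blk Z (z - ∑ j, lam j • y j) c := by
  ext (i | _) (k | _) <;> simp [blk, Matrix.sum_apply, Finset.sum_apply]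

lemma blk_zero_zero_posSemidef {c : ℝ} (hc : 0 ≤ c) :
    (blk (0 : Matrix (Fin d) (Fin d) ℝ) 0 c).PosSemidef := by
  have h : blk (0 : Matrix (Fin d) (Fin d) ℝ) 0 c = diagonal (Sum.elim 0 fun _ => c) := by
    ext (i | _) (k | _) <;> simp [blk, diagonal_apply]
  rw [h]
  exact PosSemidef.diagonal fun p => by cases p <;> simp [hc]

end Blocks

section Majorant

variable {d J : ℕ}

def quadMajorant (Z : Matrix (Fin d) (Fin d) ℝ) (z : Fin d → ℝ) (z₀ : ℝ) (θ : Fin d → ℝ) : ℝ :=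
  θ ⬝ᵥ Z *ᵥ θ + 2 * (z ⬝ᵥ θ) + z₀

variable {Z : Matrix (Fin d) (Fin d) ℝ} {z : Fin d → ℝ} {z₀ : ℝ}

lemma quadMajorant_nonneg (h : (blk Z z z₀).PosSemidef) (θ : Fin d → ℝ) :
    0 ≤ quadMajorant Z z z₀ θ := by
  simpa [quadMajorant] using quadForm_nonneg_of_blk_posSemidef h θ 1

lemma one_le_quadMajorant {x : Fin J → Fin d → ℝ} {lam : Fin J → ℝ} (hlam : ∀ j, 0 ≤ lam j)
    (h : (blk Z z (z₀ - 1) - ∑ j, lam j • blk 0 ((1 / 2 : ℝ) • x j) 0).PosSemidef)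
    {θ : Fin d → ℝ} (hθ : θ ∈ favSet x) : 1 ≤ quadMajorant Z z z₀ θ := by
  rw [blk_sub_sum_smul] at h
  have hq := quadForm_nonneg_of_blk_posSemidef h θ 1
  have hcert : 0 ≤ (∑ j, lam j • (1 / 2 : ℝ) • x j) ⬝ᵥ θ := by
    rw [sum_dotProduct]
    exact Finset.sum_nonneg fun j _ => by
      rw [smul_dotProduct, smul_dotProduct]
      exact mul_nonneg (hlam j) (mul_nonneg (by norm_num) (hθ j))
  rw [sub_dotProduct] at hq
  simp only [quadMajorant]
  linarith

end Majorant

section Moments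

lemma measureReal_le_integral_of_one_le {α : Type*} [MeasurableSpace α] {P : Measure α}
    [IsFiniteMeasure P] {s : Set α} {f : α → ℝ} (hf : Integrable f P) (h0 : ∀ a, 0 ≤ f a)
    (h1 : ∀ a ∈ s, 1 ≤ f a) : P.real s ≤ ∫ a, f a ∂P :=
  calc P.real s ≤ P.real {a | 1 ≤ f a} := measureReal_mono h1
    _ = 1 * P.real {a | 1 ≤ f a} := (one_mul _).symm
    _ ≤ ∫ a, f a ∂P := mul_meas_ge_le_integral_of_nonneg (ae_of_all _ h0) hf 1

variable {d : ℕ} {Q : Measure (Fin d → ℝ)} {μ : Fin d → ℝ} {S : Matrix (Fin d) (Fin d) ℝ}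

lemma integrable_sum_mul_coord (hm : hasMean Q μ) (a : Fin d → ℝ) :
    Integrable (fun θ => ∑ i, a i * θ i) Q :=
  integrable_finsetSum _ fun i _ => (hm i).1.const_mul _

variable [IsProbabilityMeasure Q]

lemma coord_mul_eq_centered (μ : Fin d → ℝ) (i j : Fin d) :
    (fun θ : Fin d → ℝ => θ i * θ j)
      = fun θ => (θ i - μ i) * (θ j - μ j) + (μ j * θ i + (μ i * θ j - μ i * μ j)) := by
  ext θ
  ring

lemma integrable_coord_mul (hm : hasMean Q μ) (hc : hasCov Q μ S) (i j : Fin d) :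
    Integrable (fun θ => θ i * θ j) Q := by
  rw [coord_mul_eq_centered μ i j]
  exact (hc i j).1.add (((hm i).1.const_mul _).add (((hm j).1.const_mul _).sub
    (integrable_const _)))

lemma integral_coord_mul (hm : hasMean Q μ) (hc : hasCov Q μ S) (i j : Fin d) :
    ∫ θ, θ i * θ j ∂Q = S i j + μ i * μ j := by
  have hj : Integrable (fun θ : Fin d → ℝ => μ i * θ j - μ i * μ j) Q :=
    ((hm j).1.const_mul _).sub (integrable_const _)
  have hij : Integrable (fun θ : Fin d → ℝ => μ j * θ i + (μ i * θ j - μ i * μ j)) Q :=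
    ((hm i).1.const_mul _).add hj
  rw [coord_mul_eq_centered μ i j, integral_add (hc i j).1 hij,
    integral_add ((hm i).1.const_mul _) hj, integral_sub ((hm j).1.const_mul _)
    (integrable_const _), integral_const_mul, integral_const_mul, integral_const, (hc i j).2,
    (hm i).2, (hm j).2]
  simp only [probReal_univ, one_smul]
  ring

lemma quadMajorant_eq_sum (Z : Matrix (Fin d) (Fin d) ℝ) (z : Fin d → ℝ) (z₀ : ℝ)
    (θ : Fin d → ℝ) :
    quadMajorant Z z z₀ θ = ∑ i, ∑ j, Z i j * (θ j * θ i) + ∑ i, 2 * z i * θ i + z₀ := by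
  simp only [quadMajorant, dotProduct, mulVec, Finset.mul_sum]
  congr 2
  · exact Finset.sum_congr rfl fun i _ => Finset.sum_congr rfl fun j _ => by ring
  · exact Finset.sum_congr rfl fun i _ => by ring

lemma integrable_sum_sum_mul_coord_mul (hm : hasMean Q μ) (hc : hasCov Q μ S)
    (Z : Matrix (Fin d) (Fin d) ℝ) :
    Integrable (fun θ => ∑ i, ∑ j, Z i j * (θ j * θ i)) Q :=
  integrable_finsetSum _ fun i _ => integrable_finsetSum _ fun j _ =>
    (integrable_coord_mul hm hc j i).const_mul _

lemma integrable_quadMajorant (hm : hasMean Q μ) (hc : hasCov Q μ S)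
    (Z : Matrix (Fin d) (Fin d) ℝ) (z : Fin d → ℝ) (z₀ : ℝ) :
    Integrable (quadMajorant Z z z₀) Q :=
  have h : Integrable (fun θ => ∑ i, ∑ j, Z i j * (θ j * θ i) + ∑ i, 2 * z i * θ i + z₀) Q :=
    ((integrable_sum_sum_mul_coord_mul hm hc Z).add (integrable_sum_mul_coord hm (2 * z))).add
      (integrable_const z₀)
  h.congr (ae_of_all _ fun θ => (quadMajorant_eq_sum Z z z₀ θ).symm)

lemma integral_quadMajorant (hm : hasMean Q μ) (hc : hasCov Q μ S)
    (Z : Matrix (Fin d) (Fin d) ℝ) (z : Fin d → ℝ) (z₀ : ℝ) :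
    ∫ θ, quadMajorant Z z z₀ θ ∂Q = (Z * S).trace + quadMajorant Z z z₀ μ := by
  have hquad := integrable_sum_sum_mul_coord_mul hm hc Z
  have hlin := integrable_sum_mul_coord hm (2 * z)
  simp only [quadMajorant_eq_sum, Pi.mul_apply, Pi.ofNat_apply] at hlin ⊢
  have hsum : Integrable (fun θ => ∑ i, ∑ j, Z i j * (θ j * θ i) + ∑ i, 2 * z i * θ i) Q :=
    hquad.add hlin
  rw [integral_add hsum (integrable_const _), integral_add hquad hlin,
    integral_finsetSum (f := fun (i : Fin d) (θ : Fin d → ℝ) => ∑ j, Z i j * (θ j * θ i)) _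
      fun i _ => integrable_finsetSum _ fun j _ => (integrable_coord_mul hm hc j i).const_mul _,
    integral_finsetSum (f := fun (i : Fin d) (θ : Fin d → ℝ) => 2 * z i * θ i) _
      fun i _ => (hm i).1.const_mul _,
    integral_const]
  simp_rw [integral_finsetSum (f := fun (j : Fin d) (θ : Fin d → ℝ) => Z _ j * (θ j * θ _)) _
    fun j _ => (integrable_coord_mul hm hc j _).const_mul _, integral_const_mul,
    integral_coord_mul hm hc, (hm _).2]
  simp only [trace, diag_apply, mul_apply, mul_add, Finset.sum_add_distrib, probReal_univ,
    one_smul]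
  ring

end Moments

section Feasibility

variable {d J : ℕ} {x : Fin J → Fin d → ℝ} {μhat : Fin d → ℝ} {Shat : Matrix (Fin d) (Fin d) ℝ}

lemma mean_quadForm_le {γ q : ℝ} {z : Fin d → ℝ} {Z : Matrix (Fin d) (Fin d) ℝ}
    (h : (blk (γ • 1 - Z) (γ • μhat + z) q).PosSemidef) (μ : Fin d → ℝ) :
    μ ⬝ᵥ Z *ᵥ μ + 2 * (z ⬝ᵥ μ) ≤ γ * (∑ i, (μ i - μhat i) ^ 2 - ∑ i, μhat i ^ 2) + q := by
  have hq := quadForm_nonneg_of_blk_posSemidef h μ (-1)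
  have hsq : ∑ i, (μ i - μhat i) ^ 2 - ∑ i, μhat i ^ 2 = μ ⬝ᵥ μ - 2 * (μhat ⬝ᵥ μ) := by
    simp only [dotProduct, Finset.mul_sum, ← Finset.sum_sub_distrib]
    exact Finset.sum_congr rfl fun i _ => by ring
  rw [sub_mulVec, smul_mulVec, one_mulVec, dotProduct_sub, dotProduct_smul, add_dotProduct,
    smul_dotProduct, smul_eq_mul, smul_eq_mul] at hq
  rw [hsq]
  linarith

lemma trace_mul_add_quadMajorant_le {γ z₀ q ρ : ℝ} {z : Fin d → ℝ}
    {Z Qm : Matrix (Fin d) (Fin d) ℝ} {lam : Fin J → ℝ}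
    (hF : UFeas x μhat Shat γ z₀ z Z q Qm lam) {μ : Fin d → ℝ} {S : Matrix (Fin d) (Fin d) ℝ}
    (hS : S.PosSemidef) (hG : gelbrich μ S μhat Shat ≤ ρ) :
    (Z * S).trace + quadMajorant Z z z₀ μ
      ≤ z₀ + γ * (ρ ^ 2 - (∑ i, (μhat i) ^ 2) - Shat.trace) + q + Qm.trace := by
  obtain ⟨hγ, -, -, -, -, hA, hB, -, -⟩ := hF
  have hcov := two_mul_trace_sqrt_le_of_fromBlocks (matSqrt_posSemidef Shat).isHermitian hS hA
  rw [sub_mul, trace_sub, smul_mul, Matrix.one_mul, trace_smul, smul_eq_mul] at hcov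
  have hmean := mean_quadForm_le hB μ
  have hgel := (Real.sqrt_le_iff.mp hG).2
  rw [matSqrt_eq_sqrt (matSqrt Shat * S * matSqrt Shat), trace_sub, trace_add, trace_smul,
    smul_eq_mul] at hgel
  have := mul_le_mul_of_nonneg_left hgel hγ
  simp only [quadMajorant]
  linarith

lemma uFeas_trivial (x : Fin J → Fin d → ℝ) (μhat : Fin d → ℝ)
    (Shat : Matrix (Fin d) (Fin d) ℝ) : UFeas x μhat Shat 0 1 0 0 0 0 0 := by
  refine ⟨le_rfl, .zero, le_rfl, .zero, fun _ => le_rfl, ?_, ?_,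
    blk_zero_zero_posSemidef zero_le_one, ?_⟩
  · simpa [blk2] using PosSemidef.zero
  · simpa using blk_zero_zero_posSemidef le_rfl
  · simpa using blk_zero_zero_posSemidef le_rfl

lemma le_Ustar {ρ c : ℝ} (h : ∀ γ z₀ z Z q Qm lam, UFeas x μhat Shat γ z₀ z Z q Qm lam →
    c ≤ z₀ + γ * (ρ ^ 2 - (∑ i, (μhat i) ^ 2) - Shat.trace) + q + Qm.trace) :
    c ≤ Ustar x μhat Shat ρ :=
  le_csInf ⟨_, 0, 1, 0, 0, 0, 0, 0, uFeas_trivial x μhat Shat, rfl⟩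
    fun _ ⟨γ, z₀, z, Z, q, Qm, lam, hF, hv⟩ => hv ▸ h γ z₀ z Z q Qm lam hF

end Feasibility

theorem validity_upper_bound_general {d J : ℕ}
    (x : Fin J → Fin d → ℝ) (ρ : ℝ) (hρ : 0 ≤ ρ) (μhat : Fin d → ℝ)
    (Shat : Matrix (Fin d) (Fin d) ℝ) (hShat : Shat.PosSemidef) :
    sSup { p | ∃ Q : Measure (Fin d → ℝ), inAmbiguity μhat Shat ρ Q ∧
        p = (Q (favSet x)).toReal } ≤ Ustar x μhat Shat ρ := by
  refine Real.sSup_le ?_ (le_Ustar fun γ z₀ z Z q Qm lam hF => ?_)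
  · rintro _ ⟨Q, ⟨hQ, μ, S, hS, hm, hc, hG⟩, rfl⟩
    refine le_Ustar fun γ z₀ z Z q Qm lam hF => ?_
    have hbound := trace_mul_add_quadMajorant_le hF hS hG
    obtain ⟨-, -, -, -, hlam, -, -, hC, hD⟩ := hF
    calc (Q (favSet x)).toReal ≤ ∫ θ, quadMajorant Z z z₀ θ ∂Q :=
          measureReal_le_integral_of_one_le (integrable_quadMajorant hm hc Z z z₀)
            (quadMajorant_nonneg hC) fun θ => one_le_quadMajorant hlam hD
      _ = (Z * S).trace + quadMajorant Z z z₀ μ := integral_quadMajorant hm hc Z z z₀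
      _ ≤ _ := hbound
  -- `Real.sSup_le` also needs `0 ≤ U⋆` (as `sSup ∅ = 0`): the bound above at `(μ̂, Σ̂)` itself.
  · have hself : gelbrich μhat Shat μhat Shat ≤ ρ := (gelbrich_self μhat hShat).symm ▸ hρ
    have hbound := trace_mul_add_quadMajorant_le hF hShat hself
    obtain ⟨-, hZ, -, -, -, -, -, hC, -⟩ := hF
    linarith [hZ.trace_mul_nonneg hShat, quadMajorant_nonneg hC μhat]

/-- **Theorem 2 (Upper bound).** The worst-case probability of joint validity over the
ambiguity set `𝔹` is at most the optimal value `U⋆` of the semidefinite program. -/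
theorem validity_upper_bound {d J : ℕ} (hd : 1 ≤ d) (hJ : 1 ≤ J)
    (x : Fin J → Fin d → ℝ) (ρ : ℝ) (hρ : 0 ≤ ρ) (μhat : Fin d → ℝ)
    (Shat : Matrix (Fin d) (Fin d) ℝ) (hShat : Shat.PosSemidef) :
    sSup { p | ∃ Q : Measure (Fin d → ℝ), inAmbiguity μhat Shat ρ Q ∧
        p = (Q (favSet x)).toReal } ≤ Ustar x μhat Shat ρ :=
  validity_upper_bound_general x ρ hρ μhat Shat hShat

end
end

section
/- Let d ≥ 1, let μ ∈ ℝ^d, let Σ ∈ ℝ^{d×d} be symmetric positive definite, and let S ⊆ ℝ^d be a nonempty convex set. Then the supremum, over all Borel probability measures Q on ℝ^d with mean vector μ and covariance matrix Σ, of Q(θ̃ ∈ S) equals 1/(1 + κ), where κ = inf_{θ ∈ S} (θ − μ)^⊤ Σ^{-1} (θ − μ). -/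
/-!
Write `q θ = (θ - μ)ᵀ Σ⁻¹ (θ - μ)` and let `θ*` minimise `q` over the closure of `S`, so that
`κ ≤ q θ*`. Since `S` is convex, the first-order condition at `θ*` puts `S` in the half-space
where `L θ = (Σ⁻¹ (θ* - μ))ᵀ (θ - μ) ≥ q θ*`. Under any `Q` with mean `μ` and covariance `Σ`,
`L` has mean `0` and variance `q θ*`, so Markov's inequality for `(L + 1)²` (Cantelli) gives
`Q S ≤ 1 / (1 + q θ*) ≤ 1 / (1 + κ)`.

Conversely, for `θ₀ ∈ S` and `p < 1 / (1 + q θ₀)`, the matrix `Σ - p/(1-p) (θ₀ - μ)(θ₀ - μ)ᵀ`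
is positive semidefinite by Cauchy–Schwarz. Put mass `p` at `θ₀` and spread the remaining mass
symmetrically around `μ - p/(1-p) (θ₀ - μ)` along a rank-one decomposition of that matrix: the
result has mean `μ` and covariance `Σ`. Letting `q θ₀` decrease to `κ` gives the supremum.
-/

open MeasureTheory Matrix Classical

noncomputable section

section QuadraticForm

variable {n : Type*} [Fintype n] {M : Matrix n n ℝ}

theorem Matrix.IsHermitian.dotProduct_mulVec_comm (hM : M.IsHermitian) (x y : n → ℝ) :
    x ⬝ᵥ M *ᵥ y = y ⬝ᵥ M *ᵥ x := by
  rw [dotProduct_mulVec, ← mulVec_transpose, ← conjTranspose_eq_transpose_of_trivial, hM.eq,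
    dotProduct_comm]

theorem Matrix.PosSemidef.dotProduct_mulVec_self_nonneg (hM : M.PosSemidef) (x : n → ℝ) :
    0 ≤ x ⬝ᵥ M *ᵥ x := by
  simpa using hM.dotProduct_mulVec_nonneg x

theorem Matrix.IsHermitian.dotProduct_mulVec_add_smul (hM : M.IsHermitian) (v w : n → ℝ) (t : ℝ) :
    (v + t • w) ⬝ᵥ M *ᵥ (v + t • w) =
      v ⬝ᵥ M *ᵥ v + 2 * t * (v ⬝ᵥ M *ᵥ w) + t ^ 2 * (w ⬝ᵥ M *ᵥ w) := by
  simp only [mulVec_add, mulVec_smul, add_dotProduct, smul_dotProduct, dotProduct_add,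
    dotProduct_smul, smul_eq_mul, hM.dotProduct_mulVec_comm w v]
  ring

theorem Matrix.PosSemidef.dotProduct_mulVec_sq_le (hM : M.PosSemidef) (x y : n → ℝ) :
    (x ⬝ᵥ M *ᵥ y) ^ 2 ≤ (x ⬝ᵥ M *ᵥ x) * (y ⬝ᵥ M *ᵥ y) := by
  have := LinearMap.BilinForm.apply_mul_apply_le_of_forall_zero_le (toLinearMap₂' ℝ M)
    (fun x => by simpa [toLinearMap₂'_apply'] using hM.dotProduct_mulVec_self_nonneg x) x y
  simpa only [toLinearMap₂'_apply', hM.isHermitian.dotProduct_mulVec_comm y x, ← sq] using this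

theorem Matrix.PosDef.posSemidef_sub_smul_vecMulVec [DecidableEq n] (hM : M.PosDef)
    {v : n → ℝ} {t : ℝ} (ht : 0 ≤ t) (htv : t * (v ⬝ᵥ M⁻¹ *ᵥ v) ≤ 1) :
    (M - t • vecMulVec v v).PosSemidef := by
  refine .of_dotProduct_mulVec_nonneg ?_ fun x => ?_
  · simpa using hM.isHermitian.sub
      (((posSemidef_vecMulVec_self_star v).isHermitian).smul (IsSelfAdjoint.all t))
  have hv : M *ᵥ (M⁻¹ *ᵥ v) = v := by
    rw [mulVec_mulVec, mul_nonsing_inv _ (isUnit_iff_ne_zero.2 hM.det_pos.ne'), one_mulVec]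
  have hcs := hM.posSemidef.dotProduct_mulVec_sq_le x (M⁻¹ *ᵥ v)
  rw [hv, dotProduct_comm (M⁻¹ *ᵥ v) v] at hcs
  have hx := hM.posSemidef.dotProduct_mulVec_self_nonneg x
  simp only [star_trivial, sub_mulVec, smul_mulVec, vecMulVec_mulVec, dotProduct_sub,
    dotProduct_smul, op_smul_eq_mul, smul_eq_mul, dotProduct_comm v x, ← sq]
  nlinarith [mul_le_mul_of_nonneg_left hcs ht, mul_le_mul_of_nonneg_right htv hx]

theorem Matrix.PosDef.exists_pos_mul_sq_norm_le (hM : M.PosDef) :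
    ∃ c > 0, ∀ x : n → ℝ, c * ‖x‖ ^ 2 ≤ x ⬝ᵥ M *ᵥ x := by
  rcases isEmpty_or_nonempty n with hn | hn
  · exact ⟨1, one_pos, fun x => by simp [Subsingleton.elim x 0]⟩
  obtain ⟨u, hu, hmin⟩ := (isCompact_sphere (0 : n → ℝ) 1).exists_isMinOn
    (NormedSpace.sphere_nonempty.2 zero_le_one)
    (by fun_prop : Continuous fun x : n → ℝ => x ⬝ᵥ M *ᵥ x).continuousOn
  have hu0 : u ≠ 0 := ne_zero_of_mem_unit_sphere ⟨u, hu⟩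
  refine ⟨u ⬝ᵥ M *ᵥ u, by simpa using hM.dotProduct_mulVec_pos hu0, fun x => ?_⟩
  rcases eq_or_ne x 0 with rfl | hx
  · simp
  have hx' : ‖x‖ ≠ 0 := norm_ne_zero_iff.2 hx
  have : u ⬝ᵥ M *ᵥ u ≤ (‖x‖⁻¹ • x) ⬝ᵥ M *ᵥ (‖x‖⁻¹ • x) := hmin (by simp [norm_smul, hx'])
  simp only [mulVec_smul, dotProduct_smul, smul_dotProduct, smul_eq_mul] at this
  calc u ⬝ᵥ M *ᵥ u * ‖x‖ ^ 2 ≤ ‖x‖⁻¹ * (‖x‖⁻¹ * x ⬝ᵥ M *ᵥ x) * ‖x‖ ^ 2 := by gcongr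
    _ = x ⬝ᵥ M *ᵥ x := by field_simp

theorem Matrix.PosDef.exists_isMinOn (hM : M.PosDef) (μ : n → ℝ) {K : Set (n → ℝ)}
    (hK : IsClosed K) (hne : K.Nonempty) :
    ∃ x ∈ K, IsMinOn (fun θ => (θ - μ) ⬝ᵥ M *ᵥ (θ - μ)) K x := by
  obtain ⟨c, hc, hcoer⟩ := hM.exists_pos_mul_sq_norm_le
  obtain ⟨x₀, hx₀⟩ := hne
  refine (by fun_prop : Continuous fun θ : n → ℝ => (θ - μ) ⬝ᵥ M *ᵥ (θ - μ)).continuousOn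
    |>.exists_isMinOn' hK hx₀ (Filter.Eventually.filter_mono inf_le_left ?_)
  have hdist : Filter.Tendsto (fun θ => c * dist θ μ ^ 2) (Filter.cocompact _) Filter.atTop :=
    ((Filter.tendsto_pow_atTop two_ne_zero).comp
      (tendsto_dist_right_cocompact_atTop μ)).const_mul_atTop hc
  filter_upwards [hdist.eventually_ge_atTop ((x₀ - μ) ⬝ᵥ M *ᵥ (x₀ - μ))] with θ hθ
  exact hθ.trans (by simpa [dist_eq_norm] using hcoer (θ - μ))

theorem IsMinOn.dotProduct_mulVec_le (hM : M.IsHermitian) {μ x y : n → ℝ} {K : Set (n → ℝ)}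
    (hK : Convex ℝ K) (hmin : IsMinOn (fun θ => (θ - μ) ⬝ᵥ M *ᵥ (θ - μ)) K x) (hx : x ∈ K)
    (hy : y ∈ K) : (x - μ) ⬝ᵥ M *ᵥ (x - μ) ≤ (x - μ) ⬝ᵥ M *ᵥ (y - μ) := by
  set D := (x - μ) ⬝ᵥ M *ᵥ (y - x)
  set W := (y - x) ⬝ᵥ M *ᵥ (y - x)
  have hslope : ∀ t ∈ Set.Ioc (0 : ℝ) 1, 0 ≤ 2 * D + t * W := by
    rintro t ⟨ht0, ht1⟩
    have hle : (x - μ) ⬝ᵥ M *ᵥ (x - μ) ≤ (x + t • (y - x) - μ) ⬝ᵥ M *ᵥ (x + t • (y - x) - μ) :=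
      hmin (hK.add_smul_sub_mem hx hy ⟨ht0.le, ht1⟩)
    rw [show x + t • (y - x) - μ = (x - μ) + t • (y - x) by abel,
      hM.dotProduct_mulVec_add_smul] at hle
    nlinarith
  have hD : 0 ≤ 2 * D + 0 * W :=
    ge_of_tendsto (((by fun_prop : Continuous fun t : ℝ => 2 * D + t * W).tendsto 0).mono_left
      nhdsWithin_le_nhds) (Filter.eventually_of_mem (Ioc_mem_nhdsGT one_pos) hslope)
  have : (x - μ) ⬝ᵥ M *ᵥ (y - μ) = (x - μ) ⬝ᵥ M *ᵥ (x - μ) + D := by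
    rw [← dotProduct_add, ← mulVec_add, sub_add_sub_cancel']
  linarith

theorem Matrix.PosDef.exists_supporting_halfspace (hM : M.PosDef) (μ : n → ℝ)
    {S : Set (n → ℝ)} (hne : S.Nonempty) (hconv : Convex ℝ S) :
    ∃ θs, sInf {k | ∃ θ ∈ S, k = (θ - μ) ⬝ᵥ M *ᵥ (θ - μ)} ≤ (θs - μ) ⬝ᵥ M *ᵥ (θs - μ) ∧
      ∀ θ ∈ S, (θs - μ) ⬝ᵥ M *ᵥ (θs - μ) ≤ (θs - μ) ⬝ᵥ M *ᵥ (θ - μ) := by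
  set A := {k | ∃ θ ∈ S, k = (θ - μ) ⬝ᵥ M *ᵥ (θ - μ)}
  have hA : BddBelow A :=
    ⟨0, by rintro _ ⟨θ, -, rfl⟩; exact hM.posSemidef.dotProduct_mulVec_self_nonneg _⟩
  obtain ⟨θs, hθs, hmin⟩ := hM.exists_isMinOn μ isClosed_closure hne.closure
  exact ⟨θs, closure_minimal (t := {θ | sInf A ≤ (θ - μ) ⬝ᵥ M *ᵥ (θ - μ)})
    (fun θ hθ => csInf_le hA ⟨θ, hθ, rfl⟩) (isClosed_le continuous_const (by fun_prop)) hθs,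
    fun θ hθ => hmin.dotProduct_mulVec_le hM.isHermitian hconv.closure hθs (subset_closure hθ)⟩

theorem sq_dotProduct_sub_eq_sum (a θ μ : n → ℝ) :
    (a ⬝ᵥ (θ - μ)) ^ 2 = ∑ i, ∑ j, a i * a j * ((θ i - μ i) * (θ j - μ j)) := by
  simp only [dotProduct, sq, Finset.sum_mul_sum, Pi.sub_apply]
  exact Finset.sum_congr rfl fun i _ => Finset.sum_congr rfl fun j _ => by ring

end QuadraticForm

section Moments

variable {d : ℕ} {Q : Measure (Fin d → ℝ)} {μ : Fin d → ℝ}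

theorem hasMean.integrable_dotProduct_sub [IsFiniteMeasure Q] (hm : hasMean Q μ) (a : Fin d → ℝ) :
    Integrable (fun θ => a ⬝ᵥ (θ - μ)) Q :=
  integrable_finsetSum _ fun i _ => ((hm i).1.sub (integrable_const (μ i))).const_mul (a i)

theorem hasMean.integral_dotProduct_sub [IsProbabilityMeasure Q] (hm : hasMean Q μ)
    (a : Fin d → ℝ) : ∫ θ, a ⬝ᵥ (θ - μ) ∂Q = 0 := by
  simp only [dotProduct, Pi.sub_apply]
  rw [integral_finsetSum _ fun i _ => ?_]
  · refine Finset.sum_eq_zero fun i _ => ?_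
    rw [integral_const_mul, integral_sub (hm i).1 (integrable_const _), (hm i).2]
    simp
  · exact ((hm i).1.sub (integrable_const (μ i))).const_mul (a i)

variable {Sm : Matrix (Fin d) (Fin d) ℝ}

theorem hasCov.integrable_dotProduct_sub_sq (hc : hasCov Q μ Sm) (a : Fin d → ℝ) :
    Integrable (fun θ => (a ⬝ᵥ (θ - μ)) ^ 2) Q := by
  simp only [sq_dotProduct_sub_eq_sum]
  exact integrable_finsetSum _ fun i _ => integrable_finsetSum _ fun j _ =>
    (hc i j).1.const_mul _

theorem hasCov.integral_dotProduct_sub_sq (hc : hasCov Q μ Sm) (a : Fin d → ℝ) :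
    ∫ θ, (a ⬝ᵥ (θ - μ)) ^ 2 ∂Q = a ⬝ᵥ Sm *ᵥ a := by
  simp only [sq_dotProduct_sub_eq_sum]
  rw [integral_finsetSum _ fun i _ => integrable_finsetSum _ fun j _ => (hc i j).1.const_mul _]
  simp only [dotProduct, mulVec, Finset.mul_sum]
  refine Finset.sum_congr rfl fun i _ => ?_
  rw [integral_finsetSum _ fun j _ => (hc i j).1.const_mul _]
  refine Finset.sum_congr rfl fun j _ => ?_
  rw [integral_const_mul, (hc i j).2]
  ring

end Moments

theorem measureReal_ge_le_of_integral_eq_zero {Ω : Type*} [MeasurableSpace Ω] {P : Measure Ω}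
    [IsProbabilityMeasure P] {L : Ω → ℝ} (hL : Integrable L P)
    (hL2 : Integrable (fun ω => L ω ^ 2) P) (h0 : ∫ ω, L ω ∂P = 0) {a c : ℝ} (hac : 0 < a + c) :
    P.real {ω | a ≤ L ω} ≤ (∫ ω, L ω ^ 2 ∂P + c ^ 2) / (a + c) ^ 2 := by
  have hsq : (fun ω => (L ω + c) ^ 2) = fun ω => L ω ^ 2 + (2 * c * L ω + c ^ 2) := by
    funext ω; ring
  have hlin : Integrable (fun ω => 2 * c * L ω + c ^ 2) P :=
    (hL.const_mul _).add (integrable_const _)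
  have hint : Integrable (fun ω => (L ω + c) ^ 2) P := by
    rw [hsq]; exact hL2.add hlin
  have hmoment : ∫ ω, (L ω + c) ^ 2 ∂P = ∫ ω, L ω ^ 2 ∂P + c ^ 2 := by
    rw [hsq, integral_add hL2 hlin, integral_add (hL.const_mul _) (integrable_const _),
      integral_const_mul, h0]
    simp
  have hmarkov := mul_meas_ge_le_integral_of_nonneg
    (Filter.Eventually.of_forall fun ω => sq_nonneg (L ω + c)) hint ((a + c) ^ 2)
  have hsub : {ω | a ≤ L ω} ⊆ {ω | (a + c) ^ 2 ≤ (L ω + c) ^ 2} := fun ω (hω : a ≤ L ω) => by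
    simp only [Set.mem_ofPred_eq]; gcongr
  rw [le_div_iff₀ (by positivity), mul_comm, ← hmoment]
  exact (mul_le_mul_of_nonneg_left (measureReal_mono hsub) (by positivity)).trans hmarkov

theorem measureReal_le_of_hasCov {d : ℕ} {Q : Measure (Fin d → ℝ)} [IsProbabilityMeasure Q]
    {μ : Fin d → ℝ} {Sm : Matrix (Fin d) (Fin d) ℝ} (hSm : Sm.PosDef) (hm : hasMean Q μ)
    (hc : hasCov Q μ Sm) {S : Set (Fin d → ℝ)} {θs : Fin d → ℝ}
    (hS : ∀ θ ∈ S, (θs - μ) ⬝ᵥ Sm⁻¹ *ᵥ (θs - μ) ≤ (θs - μ) ⬝ᵥ Sm⁻¹ *ᵥ (θ - μ)) :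
    Q.real S ≤ 1 / (1 + (θs - μ) ⬝ᵥ Sm⁻¹ *ᵥ (θs - μ)) := by
  set v := θs - μ
  set κ := v ⬝ᵥ Sm⁻¹ *ᵥ v
  have hκ := hSm.inv.posSemidef.dotProduct_mulVec_self_nonneg v
  have hvar : (Sm⁻¹ *ᵥ v) ⬝ᵥ Sm *ᵥ (Sm⁻¹ *ᵥ v) = κ := by
    rw [mulVec_mulVec, mul_nonsing_inv _ (isUnit_iff_ne_zero.2 hSm.det_pos.ne'), one_mulVec,
      dotProduct_comm]
  have hhalf : S ⊆ {θ | κ ≤ (Sm⁻¹ *ᵥ v) ⬝ᵥ (θ - μ)} := fun θ hθ => by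
    simpa only [Set.mem_ofPred_eq, dotProduct_comm _ (θ - μ),
      hSm.inv.isHermitian.dotProduct_mulVec_comm (θ - μ)] using hS θ hθ
  -- Cantelli for `θ ↦ (Sm⁻¹ *ᵥ v) ⬝ᵥ (θ - μ)`, whose variance and threshold on `S` both equal `κ`
  calc Q.real S ≤ Q.real {θ | κ ≤ (Sm⁻¹ *ᵥ v) ⬝ᵥ (θ - μ)} := measureReal_mono hhalf
    _ ≤ (κ + 1 ^ 2) / (κ + 1) ^ 2 := by
      simpa only [hc.integral_dotProduct_sub_sq, hvar] using
        measureReal_ge_le_of_integral_eq_zero (hm.integrable_dotProduct_sub (Sm⁻¹ *ᵥ v))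
          (hc.integrable_dotProduct_sub_sq _) (hm.integral_dotProduct_sub _) (c := 1)
          (by linarith : 0 < κ + 1)
    _ = 1 / (1 + κ) := by field_simp; ring

section DiracSum

variable {α ι : Type*} [MeasurableSpace α] [Fintype ι] {w : ι → ℝ} {x : ι → α}

def diracSum (w : ι → ℝ) (x : ι → α) : Measure α :=
  ∑ i, ENNReal.ofReal (w i) • Measure.dirac (x i)

instance : IsFiniteMeasure (diracSum w x) :=
  ⟨by simp [diracSum, ENNReal.sum_lt_top]⟩

theorem isProbabilityMeasure_diracSum (hw : ∀ i, 0 ≤ w i) (h1 : ∑ i, w i = 1) :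
    IsProbabilityMeasure (diracSum w x) := by
  constructor
  simp [diracSum, ← ENNReal.ofReal_sum_of_nonneg fun i _ => hw i, h1]

theorem integrable_diracSum [MeasurableSingletonClass α] (f : α → ℝ) :
    Integrable f (diracSum w x) :=
  integrable_finsetSum_measure.2 fun i _ =>
    ((integrable_const (f (x i))).congr (ae_eq_dirac f).symm).smul_measure ENNReal.ofReal_ne_top

theorem integral_diracSum [MeasurableSingletonClass α] (hw : ∀ i, 0 ≤ w i) (f : α → ℝ) :
    ∫ a, f a ∂diracSum w x = ∑ i, w i * f (x i) := by
  rw [diracSum, integral_finsetSum_measure fun i _ => ?_]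
  · simp [integral_smul_measure, ENNReal.toReal_ofReal (hw _)]
  · exact ((integrable_const (f (x i))).congr (ae_eq_dirac f).symm).smul_measure
      ENNReal.ofReal_ne_top

theorem le_measureReal_diracSum {s : Set α} {i : ι} (hi : x i ∈ s) :
    w i ≤ (diracSum w x).real s := by
  have hle : ENNReal.ofReal (w i) • Measure.dirac (x i) ≤ diracSum w x :=
    Finset.single_le_sum (f := fun j => ENNReal.ofReal (w j) • Measure.dirac (x j))
      (fun _ _ => Measure.zero_le _) (Finset.mem_univ i)
  rw [Measure.real, ← ENNReal.ofReal_le_iff_le_toReal (measure_ne_top _ _)]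
  simpa [Measure.dirac_apply_of_mem hi] using Measure.le_iff'.1 hle s

end DiracSum

section Construction

variable {d : ℕ} {ι : Type*} [Fintype ι] {w : ι → ℝ} {x : ι → Fin d → ℝ} {μ : Fin d → ℝ}

theorem hasMean_diracSum (hw : ∀ i, 0 ≤ w i) (h : ∑ i, w i • x i = μ) :
    hasMean (diracSum w x) μ :=
  fun j => ⟨integrable_diracSum _, by simp [integral_diracSum hw, ← h, Finset.sum_apply]⟩

theorem hasCov_diracSum {Sm : Matrix (Fin d) (Fin d) ℝ} (hw : ∀ i, 0 ≤ w i)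
    (h : ∑ i, w i • vecMulVec (x i - μ) (x i - μ) = Sm) : hasCov (diracSum w x) μ Sm :=
  fun j l => ⟨integrable_diracSum _,
    by simp [integral_diracSum hw, ← h, Matrix.sum_apply, vecMulVec_apply]⟩

theorem exists_hasMean_hasCov_atom_of_sum_vecMulVec {J : Type*} [Fintype J] [Nonempty J]
    (μ θ₀ : Fin d → ℝ) (u : J → Fin d → ℝ) {p : ℝ} (hp0 : 0 ≤ p) (hp1 : p < 1) :
    ∃ Q : Measure (Fin d → ℝ), IsProbabilityMeasure Q ∧ hasMean Q μ ∧
      hasCov Q μ ((p / (1 - p)) • vecMulVec (θ₀ - μ) (θ₀ - μ) + ∑ k, vecMulVec (u k) (u k)) ∧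
      p ≤ Q.real {θ₀} := by
  -- mass `p` at `θ₀`; the rest at `c ± s • u k`, with `c` fixing the mean and `s` the spread
  set N : ℝ := (Fintype.card J : ℝ)
  have hN : 0 < N := by simp [N, Fintype.card_pos]
  have h1p : 0 < 1 - p := by linarith
  set t := p / (1 - p)
  set c := μ - t • (θ₀ - μ)
  set s := Real.sqrt (N / (1 - p))
  have hs : s ^ 2 = N / (1 - p) := Real.sq_sqrt (by positivity)
  set w' := (1 - p) / (2 * N)
  set w : Option (J × Bool) → ℝ := fun o => o.elim p fun _ => w'
  set x : Option (J × Bool) → Fin d → ℝ :=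
    fun o => o.elim θ₀ fun kb => c + (if kb.2 then s else -s) • u kb.1
  have hw : ∀ i, 0 ≤ w i := by rintro (_ | _) <;> simp [w, w'] <;> positivity
  have hmean : ∀ k, ∑ b : Bool, w' • x (some (k, b)) = (2 * w') • c := by
    intro k; ext j; simp [x]; ring
  have hcov : ∀ k, ∑ b : Bool, w' • vecMulVec (x (some (k, b)) - μ) (x (some (k, b)) - μ) =
      (2 * w') • vecMulVec (c - μ) (c - μ) + (2 * w' * s ^ 2) • vecMulVec (u k) (u k) := by
    intro k; ext j l; simp [x, vecMulVec_apply]; ring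
  refine ⟨diracSum w x, isProbabilityMeasure_diracSum hw ?_, hasMean_diracSum hw ?_,
    hasCov_diracSum hw ?_, le_measureReal_diracSum (w := w) (x := x) (i := none) rfl⟩
  · simp [w, w', Fintype.sum_option, N]
    field_simp; ring
  · rw [Fintype.sum_option, Fintype.sum_prod_type]
    simp only [w, Option.elim_none, Option.elim_some]
    rw [Finset.sum_congr rfl fun k _ => hmean k, Finset.sum_const, Finset.card_univ,
      ← Nat.cast_smul_eq_nsmul ℝ]
    ext j
    simp [x, c, t, w', N]
    field_simp; ring
  · rw [Fintype.sum_option, Fintype.sum_prod_type]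
    simp only [w, Option.elim_none, Option.elim_some]
    rw [Finset.sum_congr rfl fun k _ => hcov k, Finset.sum_add_distrib, Finset.sum_const,
      Finset.card_univ, ← Nat.cast_smul_eq_nsmul ℝ, ← Finset.smul_sum]
    ext j l
    simp [x, c, vecMulVec_apply, hs, N, w', t, Matrix.sum_apply]
    field_simp; ring

theorem exists_hasMean_hasCov_atom {Sm : Matrix (Fin d) (Fin d) ℝ} (hSm : Sm.PosDef)
    (μ θ₀ : Fin d → ℝ) {y : ℝ} (hy : y < 1 / (1 + (θ₀ - μ) ⬝ᵥ Sm⁻¹ *ᵥ (θ₀ - μ))) :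
    ∃ Q : Measure (Fin d → ℝ), IsProbabilityMeasure Q ∧ hasMean Q μ ∧ hasCov Q μ Sm ∧
      y < Q.real {θ₀} := by
  set v := θ₀ - μ
  set k := v ⬝ᵥ Sm⁻¹ *ᵥ v
  have hk := hSm.inv.posSemidef.dotProduct_mulVec_self_nonneg v
  obtain ⟨p, hyp, hp⟩ := exists_between (max_lt hy (by positivity))
  have hp0 : 0 ≤ p := (le_max_right _ _).trans hyp.le
  have hpk : p * (1 + k) < 1 := (lt_div_iff₀ (by positivity)).1 hp
  have hp1 : p < 1 := by nlinarith
  have htk : p / (1 - p) * k ≤ 1 := by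
    rw [div_mul_eq_mul_div, div_le_one (by linarith)]; linarith
  obtain ⟨m, u, hu⟩ := posSemidef_iff_eq_sum_vecMulVec.1
    (hSm.posSemidef_sub_smul_vecMulVec (by positivity) htk)
  -- padding with the zero vector makes the index type nonempty
  obtain ⟨Q, hQ, hm, hc, hθ₀⟩ := exists_hasMean_hasCov_atom_of_sum_vecMulVec μ θ₀
    (fun o : Option (Fin m) => o.elim 0 u) hp0 hp1
  have hSm' : Sm = (p / (1 - p)) • vecMulVec v v +
      ∑ o : Option (Fin m), vecMulVec (o.elim 0 u) (o.elim 0 u) := by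
    simp only [Fintype.sum_option, Option.elim_none, Option.elim_some, zero_vecMulVec, zero_add]
    simpa only [star_trivial, sub_eq_iff_eq_add'] using hu
  exact ⟨Q, hQ, hm, hSm' ▸ hc, ((le_max_left _ _).trans_lt hyp).trans_le hθ₀⟩

end Construction

theorem exists_lt_one_div_one_add_of_lt {A : Set ℝ} (hA : A.Nonempty) (hA0 : ∀ k ∈ A, 0 ≤ k)
    {y : ℝ} (hy : y < 1 / (1 + sInf A)) : ∃ k ∈ A, y < 1 / (1 + k) := by
  rcases le_or_gt y 0 with hy0 | hy0
  · obtain ⟨k, hk⟩ := hA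
    exact ⟨k, hk, hy0.trans_lt (by have := hA0 k hk; positivity)⟩
  have hinf : sInf A < 1 / y - 1 := by
    have := (lt_div_iff₀ (by linarith [Real.sInf_nonneg hA0])).1 hy
    rw [lt_sub_iff_add_lt, lt_div_iff₀ hy0]; linarith
  obtain ⟨k, hk, hlt⟩ := exists_lt_of_csInf_lt hA hinf
  refine ⟨k, hk, (lt_div_iff₀ (by have := hA0 k hk; positivity)).2 ?_⟩
  rw [lt_sub_iff_add_lt, lt_div_iff₀ hy0] at hlt; linarith

theorem multivariate_chebyshev_general {d : ℕ} (μ : Fin d → ℝ)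
    (Sm : Matrix (Fin d) (Fin d) ℝ) (hSm : Sm.PosDef) (S : Set (Fin d → ℝ))
    (hne : S.Nonempty) (hconv : Convex ℝ S) :
    sSup { p | ∃ Q : Measure (Fin d → ℝ), IsProbabilityMeasure Q ∧
        hasMean Q μ ∧ hasCov Q μ Sm ∧ p = (Q S).toReal } =
      1 / (1 + sInf { k | ∃ θ ∈ S, k = (θ - μ) ⬝ᵥ (Sm⁻¹ *ᵥ (θ - μ)) }) := by
  set P := { p | ∃ Q : Measure (Fin d → ℝ), IsProbabilityMeasure Q ∧
    hasMean Q μ ∧ hasCov Q μ Sm ∧ p = (Q S).toReal }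
  set A := { k | ∃ θ ∈ S, k = (θ - μ) ⬝ᵥ (Sm⁻¹ *ᵥ (θ - μ)) }
  have hA0 : ∀ k ∈ A, 0 ≤ k := by
    rintro _ ⟨θ, -, rfl⟩; exact hSm.inv.posSemidef.dotProduct_mulVec_self_nonneg _
  have hAne : A.Nonempty := let ⟨θ, hθ⟩ := hne; ⟨_, θ, hθ, rfl⟩
  have hκ : 0 < 1 + sInf A := by linarith [Real.sInf_nonneg hA0]
  have happrox : ∀ y < 1 / (1 + sInf A), ∃ p ∈ P, y < p := by
    intro y hy
    obtain ⟨_, ⟨θ₀, hθ₀, rfl⟩, hy⟩ := exists_lt_one_div_one_add_of_lt hAne hA0 hy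
    obtain ⟨Q, hQ, hm, hc, hyQ⟩ := exists_hasMean_hasCov_atom hSm μ θ₀ hy
    exact ⟨_, ⟨Q, hQ, hm, hc, rfl⟩, hyQ.trans_le (measureReal_mono (by simpa using hθ₀))⟩
  obtain ⟨θs, hκs, hhalf⟩ := hSm.inv.exists_supporting_halfspace μ hne hconv
  refine csSup_eq_of_forall_le_of_forall_lt_exists_gt ?_ ?_ happrox
  · obtain ⟨p, hp, -⟩ := happrox 0 (by positivity)
    exact ⟨p, hp⟩
  · rintro _ ⟨Q, hQ, hm, hc, rfl⟩
    exact (measureReal_le_of_hasCov hSm hm hc hhalf).trans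
      (one_div_le_one_div_of_le hκ (by linarith))

/-- **Multivariate Chebyshev inequality (Marshall–Olkin).** For a nonempty convex set `S`,
the supremum over all probability measures with mean `μ` and covariance `Σ` of the
probability of `S` equals `1/(1 + κ)`, where `κ` is the squared Mahalanobis distance
from `μ` to `S`. -/
theorem multivariate_chebyshev {d : ℕ} (hd : 1 ≤ d) (μ : Fin d → ℝ)
    (Sm : Matrix (Fin d) (Fin d) ℝ) (hSm : Sm.PosDef) (S : Set (Fin d → ℝ))
    (hne : S.Nonempty) (hconv : Convex ℝ S) :
    sSup { p | ∃ Q : Measure (Fin d → ℝ), IsProbabilityMeasure Q ∧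
        hasMean Q μ ∧ hasCov Q μ Sm ∧ p = (Q S).toReal } =
      1 / (1 + sInf { k | ∃ θ ∈ S, k = (θ - μ) ⬝ᵥ (Sm⁻¹ *ᵥ (θ - μ)) }) :=
  multivariate_chebyshev_general μ Sm hSm S hne hconv

end
end

section
/- Let d ≥ 1, let μ̂ ∈ ℝ^d, let Σ̂ ∈ ℝ^{d×d} be symmetric positive definite, let x_j ∈ ℝ^d, and let Δ > 0. Suppose every optimal solution x of the problem max_{‖x − x_j‖₂ ≤ Δ} min_{θ : θ^⊤x = 0} sqrt((θ − μ̂)^⊤ Σ̂^{-1} (θ − μ̂)) satisfies x^⊤μ̂ > 0. Then this max–min problem has the same optimal solutions as the fractional program max { x^⊤μ̂ / sqrt(x^⊤ Σ̂ x) : x ∈ ℝ^d, ‖x − x_j‖₂ ≤ Δ }. -/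
open MeasureTheory Matrix Classical

noncomputable section

/-- Mahalanobis distance (w.r.t. `Shat`) from `μhat` to the hyperplane `{θ : θᵀx = 0}`. -/
noncomputable def mahalDistToHyperplane {d : ℕ} (Shat : Matrix (Fin d) (Fin d) ℝ)
    (μhat x : Fin d → ℝ) : ℝ :=
  sInf { s | ∃ θ : Fin d → ℝ, θ ⬝ᵥ x = 0 ∧
    s = Real.sqrt ((θ - μhat) ⬝ᵥ (Shat⁻¹ *ᵥ (θ - μhat))) }

/-! The Mahalanobis distance from `μ̂` to the hyperplane `xᗮ` is `|r x|` with
`r x = xᵀμ̂ / √(xᵀΣ̂x)`: Cauchy–Schwarz for the `Σ̂⁻¹`-inner product bounds it below, and the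
`Σ̂⁻¹`-orthogonal projection of `μ̂` onto the hyperplane attains the bound. So the max–min problem
maximizes `|r|` over the ball and the fractional program maximizes `r`.

A maximizer of `|r|` has `r > 0` by hypothesis, hence maximizes `r`. Conversely, if `x` maximizes
`r`, it suffices that `|r|` has some maximizer `m`, for then `|r y| ≤ r m ≤ r x`. As `r` is odd,
invariant under positive scaling and continuous away from `0`, `|r|` attains its maximum over the
ball: on the ball itself if `0` lies outside, on a small sphere around `0` if `0` lies inside. If
`0` lies on the boundary, the directions into the ball form an open hemisphere; `|r|` is maximized
on its closure at some `u`, and if `u` is tangent to the ball at `0`, then `±u` is a limit of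
directions into the ball, so `|r u| ≤ r x` by continuity and `x` itself maximizes `|r|`. -/

namespace Matrix.PosDef

variable {n : Type*} [Fintype n] {S : Matrix n n ℝ}

theorem mulVec_dotProduct (hS : S.PosDef) (u v : n → ℝ) : S *ᵥ u ⬝ᵥ v = u ⬝ᵥ S *ᵥ v := by
  have hT : Sᵀ = S := by simpa using hS.isHermitian.eq
  rw [dotProduct_comm, ← dotProduct_transpose_mulVec, hT]

variable [DecidableEq n]

theorem mulVec_inv_mulVec (hS : S.PosDef) (v : n → ℝ) : S *ᵥ S⁻¹ *ᵥ v = v := by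
  rw [mulVec_mulVec, mul_nonsing_inv _ hS.det_pos.ne'.isUnit, one_mulVec]

theorem inv_mulVec_mulVec (hS : S.PosDef) (v : n → ℝ) : S⁻¹ *ᵥ S *ᵥ v = v := by
  rw [mulVec_mulVec, nonsing_inv_mul _ hS.det_pos.ne'.isUnit, one_mulVec]

-- Cauchy–Schwarz for the form `S⁻¹`, applied to `S *ᵥ x` and `v`.
theorem sq_dotProduct_le (hS : S.PosDef) (x v : n → ℝ) :
    (x ⬝ᵥ v) ^ 2 ≤ (x ⬝ᵥ S *ᵥ x) * (v ⬝ᵥ S⁻¹ *ᵥ v) := by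
  have hcs := LinearMap.BilinForm.apply_sq_le_of_symm (toLinearMap₂' ℝ S⁻¹)
    (fun u => by simpa [toLinearMap₂'_apply'] using hS.inv.posSemidef.dotProduct_mulVec_nonneg u)
    ⟨fun u w => by
      rw [RingHom.id_apply, toLinearMap₂'_apply', toLinearMap₂'_apply', dotProduct_comm,
        hS.inv.mulVec_dotProduct]⟩
    (S *ᵥ x) v
  rwa [toLinearMap₂'_apply', toLinearMap₂'_apply', toLinearMap₂'_apply', hS.inv_mulVec_mulVec,
    hS.mulVec_dotProduct, hS.mulVec_dotProduct, hS.mulVec_inv_mulVec] at hcs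

end Matrix.PosDef

def signedMahalDist {n : Type*} [Fintype n] (S : Matrix n n ℝ) (μ x : n → ℝ) : ℝ :=
  (x ⬝ᵥ μ) / √(x ⬝ᵥ S *ᵥ x)

theorem abs_signedMahalDist_le {n : Type*} [Fintype n] [DecidableEq n] {S : Matrix n n ℝ}
    (hS : S.PosDef) (μ : n → ℝ) {x θ : n → ℝ} (hθ : θ ⬝ᵥ x = 0) :
    |signedMahalDist S μ x| ≤ √((θ - μ) ⬝ᵥ S⁻¹ *ᵥ (θ - μ)) := by
  have hdot : (x ⬝ᵥ (θ - μ)) ^ 2 = (x ⬝ᵥ μ) ^ 2 := by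
    rw [dotProduct_sub, dotProduct_comm, hθ, zero_sub, neg_sq]
  rw [signedMahalDist, abs_div, abs_of_nonneg (Real.sqrt_nonneg _)]
  refine div_le_of_le_mul₀ (Real.sqrt_nonneg _) (Real.sqrt_nonneg _) ?_
  have hQ : 0 ≤ (θ - μ) ⬝ᵥ S⁻¹ *ᵥ (θ - μ) := by
    simpa using hS.inv.posSemidef.dotProduct_mulVec_nonneg (θ - μ)
  rw [← Real.sqrt_mul hQ, mul_comm]
  exact Real.abs_le_sqrt (hdot ▸ hS.sq_dotProduct_le x (θ - μ))

theorem mahalDistToHyperplane_eq_abs {d : ℕ} {S : Matrix (Fin d) (Fin d) ℝ} (hS : S.PosDef)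
    (μ x : Fin d → ℝ) : mahalDistToHyperplane S μ x = |signedMahalDist S μ x| := by
  refine IsLeast.csInf_eq ⟨?_, ?_⟩
  · rcases eq_or_ne x 0 with rfl | hx
    · exact ⟨μ, by simp, by simp [signedMahalDist]⟩
    have hq : 0 < x ⬝ᵥ S *ᵥ x := by simpa using hS.dotProduct_mulVec_pos hx
    -- the `S⁻¹`-orthogonal projection of `μ` onto the hyperplane
    refine ⟨μ - ((x ⬝ᵥ μ) / (x ⬝ᵥ S *ᵥ x)) • S *ᵥ x, ?_, ?_⟩
    · rw [sub_dotProduct, smul_dotProduct, hS.mulVec_dotProduct, dotProduct_comm μ, smul_eq_mul,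
        div_mul_cancel₀ _ hq.ne', sub_self]
    · rw [sub_sub_cancel_left, mulVec_neg, mulVec_smul, hS.inv_mulVec_mulVec, neg_dotProduct,
        dotProduct_neg, neg_neg, smul_dotProduct, dotProduct_smul, smul_eq_mul, smul_eq_mul,
        hS.mulVec_dotProduct, signedMahalDist, ← Real.sqrt_sq_eq_abs, div_pow,
        Real.sq_sqrt hq.le]
      field_simp
  · rintro s ⟨θ, hθ, rfl⟩
    exact abs_signedMahalDist_le hS μ hθ

section SignedMahalDist

variable {n : Type*} [Fintype n] {S : Matrix n n ℝ} (μ : n → ℝ)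

theorem signedMahalDist_smul {t : ℝ} (ht : 0 < t) (x : n → ℝ) :
    signedMahalDist S μ (t • x) = signedMahalDist S μ x := by
  rw [signedMahalDist, signedMahalDist, mulVec_smul, smul_dotProduct, dotProduct_smul,
    smul_dotProduct, smul_eq_mul, smul_eq_mul, smul_eq_mul, ← mul_assoc, ← sq,
    Real.sqrt_mul (sq_nonneg t), Real.sqrt_sq ht.le, mul_div_mul_left _ _ ht.ne']

theorem signedMahalDist_neg (x : n → ℝ) :
    signedMahalDist S μ (-x) = -signedMahalDist S μ x := by
  simp only [signedMahalDist, mulVec_neg, dotProduct_neg, neg_dotProduct, neg_neg, neg_div]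

theorem signedMahalDist_pos (hS : S.PosDef) {x : n → ℝ} (hx : 0 < x ⬝ᵥ μ) :
    0 < signedMahalDist S μ x := by
  have hx0 : x ≠ 0 := by rintro rfl; simp at hx
  have hq : 0 < x ⬝ᵥ S *ᵥ x := by simpa using hS.dotProduct_mulVec_pos hx0
  exact div_pos hx (Real.sqrt_pos.2 hq)

theorem continuousAt_signedMahalDist (hS : S.PosDef) {x : n → ℝ} (hx : x ≠ 0) :
    ContinuousAt (signedMahalDist S μ) x := by
  have hq : 0 < x ⬝ᵥ S *ᵥ x := by simpa using hS.dotProduct_mulVec_pos hx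
  unfold signedMahalDist
  exact ContinuousAt.div (by fun_prop) (by fun_prop) (Real.sqrt_pos.mpr hq).ne'

end SignedMahalDist

theorem IsMaxOn.of_abs {α : Type*} {f : α → ℝ} {s : Set α} {x : α}
    (hx : IsMaxOn (|f ·|) s x) (hpos : 0 < f x) : IsMaxOn f s x :=
  fun y hy => (le_abs_self (f y)).trans ((hx hy).trans_eq (abs_of_pos hpos))

theorem IsMaxOn.abs_of_isMaxOn_abs {α : Type*} {f : α → ℝ} {s : Set α} {x m : α}
    (hx : IsMaxOn f s x) (hm : IsMaxOn (|f ·|) s m) (hms : m ∈ s) (hpos : 0 < f m) :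
    IsMaxOn (|f ·|) s x :=
  fun _ hy => (hm hy).trans ((abs_of_pos hpos).trans_le ((hx hms).trans (le_abs_self (f x))))

section ConeMaximization

open Metric
open scoped RealInnerProductSpace Topology
open Filter

variable {E : Type*} {f : E → ℝ}

theorem isMaxOn_abs_of_forall_smul_mem [AddCommGroup E] [Module ℝ E] {s K : Set E} {u : E}
    (hf0 : f 0 = 0) (hsmul : ∀ t : ℝ, 0 < t → ∀ z, f (t • z) = f z)
    (hu : IsMaxOn (|f ·|) K u) (hcone : ∀ y ∈ s, y ≠ 0 → ∃ t : ℝ, 0 < t ∧ t • y ∈ K) :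
    IsMaxOn (|f ·|) s u := by
  intro y hy
  rcases eq_or_ne y 0 with rfl | hy0
  · simp [hf0]
  · obtain ⟨t, ht, htK⟩ := hcone y hy hy0
    have h : |f (t • y)| ≤ |f u| := hu htK
    rwa [hsmul t ht] at h

theorem exists_isMaxOn_abs_of_isCompact [AddCommGroup E] [Module ℝ E] [TopologicalSpace E]
    {s K : Set E} (hf0 : f 0 = 0) (hsmul : ∀ t : ℝ, 0 < t → ∀ z, f (t • z) = f z)
    (hs : s.Nonempty) (hK : IsCompact K) (hKs : K ⊆ s) (hfK : ContinuousOn f K)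
    (hcone : ∀ y ∈ s, y ≠ 0 → ∃ t : ℝ, 0 < t ∧ t • y ∈ K) :
    ∃ m ∈ s, IsMaxOn (|f ·|) s m := by
  rcases K.eq_empty_or_nonempty with rfl | hKne
  · have hs0 : ∀ y ∈ s, y = 0 := fun y hy => by
      by_contra hy0
      obtain ⟨t, -, ht⟩ := hcone y hy hy0
      exact ht
    obtain ⟨m, hm⟩ := hs
    exact ⟨m, hm, fun y hy => by
      show |f y| ≤ |f m|
      rw [hs0 y hy, hs0 m hm]⟩
  · obtain ⟨u, huK, hu⟩ := hK.exists_isMaxOn hKne hfK.abs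
    exact ⟨u, hKs huK, isMaxOn_abs_of_forall_smul_mem hf0 hsmul hu hcone⟩

section InnerProductSpace

variable [NormedAddCommGroup E] [InnerProductSpace ℝ E]

theorem mem_closedBall_norm_iff {c z : E} : z ∈ closedBall c ‖c‖ ↔ ‖z‖ ^ 2 ≤ 2 * ⟪z, c⟫ := by
  rw [mem_closedBall, dist_eq_norm, ← sq_le_sq₀ (norm_nonneg _) (norm_nonneg _), norm_sub_sq_real]
  constructor <;> intro h <;> linarith

theorem exists_pos_smul_mem_closedBall_norm {c z : E} (hz : 0 < ⟪z, c⟫) :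
    ∃ t : ℝ, 0 < t ∧ t • z ∈ closedBall c ‖c‖ := by
  have hz0 : z ≠ 0 := by rintro rfl; simp at hz
  have hzz : 0 < ‖z‖ ^ 2 := by positivity
  refine ⟨⟪z, c⟫ / ‖z‖ ^ 2, by positivity, mem_closedBall_norm_iff.2 ?_⟩
  rw [norm_smul, real_inner_smul_left, Real.norm_eq_abs, abs_of_pos (by positivity), mul_pow]
  field_simp
  nlinarith

theorem le_of_isMaxOn_closedBall_norm (hcont : ∀ z ≠ 0, ContinuousAt f z)
    (hsmul : ∀ t : ℝ, 0 < t → ∀ z, f (t • z) = f z) {c x v : E} (hc : c ≠ 0)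
    (hmax : IsMaxOn f (closedBall c ‖c‖) x) (hv0 : v ≠ 0) (hvc : ⟪v, c⟫ = 0) : f v ≤ f x := by
  have hnear : ∀ ε : ℝ, 0 < ε → f (v + ε • c) ≤ f x := fun ε hε => by
    have hpos : 0 < ⟪v + ε • c, c⟫ := by
      rw [inner_add_left, hvc, real_inner_smul_left, real_inner_self_eq_norm_sq, zero_add]
      positivity
    obtain ⟨t, ht, hts⟩ := exists_pos_smul_mem_closedBall_norm hpos
    rw [← hsmul t ht]
    exact hmax hts
  have hline : Tendsto (fun ε : ℝ => v + ε • c) (𝓝[>] 0) (𝓝 v) :=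
    ((Continuous.tendsto' (by fun_prop) 0 v (by simp))).mono_left nhdsWithin_le_nhds
  exact le_of_tendsto ((hcont v hv0).tendsto.comp hline) (eventually_nhdsWithin_of_forall hnear)

theorem exists_isMaxOn_abs_closedBall_norm [FiniteDimensional ℝ E]
    (hcont : ∀ z ≠ 0, ContinuousAt f z) (hsmul : ∀ t : ℝ, 0 < t → ∀ z, f (t • z) = f z)
    (hodd : f.Odd) {c x : E} (hc : c ≠ 0) (hx : x ∈ closedBall c ‖c‖)
    (hmax : IsMaxOn f (closedBall c ‖c‖) x) :
    ∃ m ∈ closedBall c ‖c‖, IsMaxOn (|f ·|) (closedBall c ‖c‖) m := by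
  have hunit : ∀ y : E, y ≠ 0 → ‖y‖⁻¹ • y ∈ sphere (0 : E) 1 := fun y hy => by
    rw [mem_sphere_zero_iff_norm, norm_smul, norm_inv, norm_norm, inv_mul_cancel₀ (by simpa)]
  set H := sphere (0 : E) 1 ∩ {u | 0 ≤ ⟪u, c⟫}
  have hH : IsCompact H := (isCompact_sphere 0 1).inter_right
    (isClosed_le continuous_const (continuous_id.inner continuous_const))
  have hcH : ‖c‖⁻¹ • c ∈ H := ⟨hunit c hc, show 0 ≤ ⟪‖c‖⁻¹ • c, c⟫ by
    rw [real_inner_smul_left, real_inner_self_eq_norm_sq]; positivity⟩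
  have hfH : ContinuousOn f H := fun u hu =>
    (hcont u (ne_zero_of_mem_unit_sphere ⟨u, hu.1⟩)).continuousWithinAt
  obtain ⟨u, ⟨hu1, huc⟩, hu⟩ := hH.exists_isMaxOn ⟨_, hcH⟩ hfH.abs
  have hbound : IsMaxOn (|f ·|) (closedBall c ‖c‖) u := by
    refine isMaxOn_abs_of_forall_smul_mem hodd.map_zero hsmul hu fun y hy hy0 =>
      ⟨‖y‖⁻¹, by positivity, hunit y hy0, show 0 ≤ ⟪‖y‖⁻¹ • y, c⟫ from ?_⟩
    have : 0 ≤ ⟪y, c⟫ := by nlinarith [mem_closedBall_norm_iff.1 hy, sq_nonneg ‖y‖]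
    rw [real_inner_smul_left]
    positivity
  rcases (show 0 ≤ ⟪u, c⟫ from huc).lt_or_eq with huc | huc
  · obtain ⟨t, ht, hts⟩ := exists_pos_smul_mem_closedBall_norm huc
    refine ⟨t • u, hts, fun y hy => ?_⟩
    show |f y| ≤ |f (t • u)|
    rw [hsmul t ht]
    exact hbound hy
  -- `u` is tangent to the ball at `0`, and `x` itself maximizes `|f|`
  have hu0 : u ≠ 0 := ne_zero_of_mem_unit_sphere ⟨u, hu1⟩
  obtain ⟨v, hv0, hvc, hfv⟩ : ∃ v : E, v ≠ 0 ∧ ⟪v, c⟫ = 0 ∧ f v = |f u| := by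
    rcases abs_choice (f u) with h | h
    · exact ⟨u, hu0, huc.symm, h.symm⟩
    · exact ⟨-u, neg_ne_zero.2 hu0, by rw [inner_neg_left, ← huc, neg_zero], by rw [hodd, h]⟩
  have hvx := le_of_isMaxOn_closedBall_norm hcont hsmul hc hmax hv0 hvc
  exact ⟨x, hx, fun y hy => (hbound hy).trans (hfv ▸ hvx.trans (le_abs_self _))⟩

theorem exists_isMaxOn_abs_closedBall [FiniteDimensional ℝ E]
    (hcont : ∀ z ≠ 0, ContinuousAt f z) (hsmul : ∀ t : ℝ, 0 < t → ∀ z, f (t • z) = f z)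
    (hodd : f.Odd) {c x : E} {Δ : ℝ} (hΔ : 0 < Δ) (hx : x ∈ closedBall c Δ)
    (hmax : IsMaxOn f (closedBall c Δ) x) :
    ∃ m ∈ closedBall c Δ, IsMaxOn (|f ·|) (closedBall c Δ) m := by
  have hc : c ∈ closedBall c Δ := mem_closedBall_self hΔ.le
  rcases lt_trichotomy Δ ‖c‖ with hout | rfl | hin
  · refine exists_isMaxOn_abs_of_isCompact hodd.map_zero hsmul ⟨c, hc⟩ (isCompact_closedBall c Δ)
      subset_rfl (fun z hz => (hcont z ?_).continuousWithinAt)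
      (fun y hy _ => ⟨1, one_pos, by rwa [one_smul]⟩)
    rintro rfl
    rw [mem_closedBall, dist_zero_left] at hz
    linarith
  · exact exists_isMaxOn_abs_closedBall_norm hcont hsmul hodd (norm_pos_iff.1 hΔ) hx hmax
  · have hρ : 0 < Δ - ‖c‖ := sub_pos.2 hin
    refine exists_isMaxOn_abs_of_isCompact hodd.map_zero hsmul ⟨c, hc⟩ (isCompact_sphere 0 _)
      (fun z hz => ?_)
      (fun z hz => (hcont z (ne_zero_of_mem_sphere hρ.ne' ⟨z, hz⟩)).continuousWithinAt)
      (fun y _ hy0 => ⟨(Δ - ‖c‖) / ‖y‖, by positivity, ?_⟩)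
    · rw [mem_sphere_zero_iff_norm] at hz
      rw [mem_closedBall, dist_eq_norm]
      linarith [norm_sub_le z c]
    · rw [mem_sphere_zero_iff_norm, norm_smul, Real.norm_eq_abs, abs_of_pos (by positivity),
        div_mul_cancel₀ _ (norm_ne_zero_iff.2 hy0)]

end InnerProductSpace

end ConeMaximization

theorem euclNorm_eq_norm {d : ℕ} (v : Fin d → ℝ) :
    euclNorm v = ‖(WithLp.toLp 2 v : EuclideanSpace ℝ (Fin d))‖ := by
  simp [euclNorm, EuclideanSpace.norm_eq]

theorem exists_isMaxOn_abs_signedMahalDist {d : ℕ} {S : Matrix (Fin d) (Fin d) ℝ} (hS : S.PosDef)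
    (μ xj : Fin d → ℝ) {Δ : ℝ} (hΔ : 0 < Δ) {x : Fin d → ℝ} (hx : euclNorm (x - xj) ≤ Δ)
    (hmax : IsMaxOn (signedMahalDist S μ) {y | euclNorm (y - xj) ≤ Δ} x) :
    ∃ m, euclNorm (m - xj) ≤ Δ ∧
      IsMaxOn (|signedMahalDist S μ ·|) {y | euclNorm (y - xj) ≤ Δ} m := by
  have hball : ∀ y, euclNorm (y - xj) ≤ Δ ↔
      WithLp.toLp 2 y ∈ Metric.closedBall (WithLp.toLp 2 xj : EuclideanSpace ℝ (Fin d)) Δ := by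
    intro y
    rw [Metric.mem_closedBall, dist_eq_norm, ← WithLp.toLp_sub, euclNorm_eq_norm]
  obtain ⟨m, hm, hmmax⟩ := exists_isMaxOn_abs_closedBall
    (f := fun z : EuclideanSpace ℝ (Fin d) => signedMahalDist S μ z.ofLp)
    (fun z hz => (continuousAt_signedMahalDist μ hS (by simpa using hz)).comp
      (PiLp.continuous_ofLp 2 _).continuousAt)
    (fun t ht z => signedMahalDist_smul μ ht z.ofLp)
    (fun z => signedMahalDist_neg μ z.ofLp) hΔ ((hball x).1 hx)
    (fun z hz => hmax ((hball z.ofLp).2 hz))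
  exact ⟨m.ofLp, (hball m.ofLp).2 hm, fun y hy => hmmax ((hball y).1 hy)⟩

theorem maxmin_eq_fractional_program_general {d : ℕ} (μhat : Fin d → ℝ)
    (Shat : Matrix (Fin d) (Fin d) ℝ) (hShat : Shat.PosDef) (xj : Fin d → ℝ)
    (Δ : ℝ) (hΔ : 0 < Δ)
    (hpos : ∀ x : Fin d → ℝ, euclNorm (x - xj) ≤ Δ →
      (∀ y : Fin d → ℝ, euclNorm (y - xj) ≤ Δ →
        mahalDistToHyperplane Shat μhat y ≤ mahalDistToHyperplane Shat μhat x) →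
      0 < x ⬝ᵥ μhat) :
    { x : Fin d → ℝ | euclNorm (x - xj) ≤ Δ ∧
        ∀ y : Fin d → ℝ, euclNorm (y - xj) ≤ Δ →
          mahalDistToHyperplane Shat μhat y ≤ mahalDistToHyperplane Shat μhat x } =
    { x : Fin d → ℝ | euclNorm (x - xj) ≤ Δ ∧
        ∀ y : Fin d → ℝ, euclNorm (y - xj) ≤ Δ →
          (y ⬝ᵥ μhat) / Real.sqrt (y ⬝ᵥ (Shat *ᵥ y)) ≤
            (x ⬝ᵥ μhat) / Real.sqrt (x ⬝ᵥ (Shat *ᵥ x)) } := by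
  simp only [mahalDistToHyperplane_eq_abs hShat] at hpos ⊢
  have hmax_pos : ∀ m, euclNorm (m - xj) ≤ Δ →
      IsMaxOn (|signedMahalDist Shat μhat ·|) {y | euclNorm (y - xj) ≤ Δ} m →
      0 < signedMahalDist Shat μhat m :=
    fun m hm hmax => signedMahalDist_pos μhat hShat (hpos m hm hmax)
  ext x
  refine and_congr_right fun hx => ⟨fun hmax => ?_, fun hmax => ?_⟩
  · exact IsMaxOn.of_abs hmax (hmax_pos x hx hmax)
  · obtain ⟨m, hm, hmmax⟩ := exists_isMaxOn_abs_signedMahalDist hShat μhat xj hΔ hx hmax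
    exact IsMaxOn.abs_of_isMaxOn_abs hmax hmmax hm (hmax_pos m hm hmmax)

/-- If every optimal solution of the max–min Mahalanobis correction problem over the ball
of radius `Δ` around `x_j` satisfies `xᵀμ̂ > 0`, then the max–min problem has the same
optimal solutions as the fractional program `max { xᵀμ̂ / sqrt(xᵀΣ̂x) : ‖x - x_j‖₂ ≤ Δ }`. -/
theorem maxmin_eq_fractional_program {d : ℕ} (hd : 1 ≤ d) (μhat : Fin d → ℝ)
    (Shat : Matrix (Fin d) (Fin d) ℝ) (hShat : Shat.PosDef) (xj : Fin d → ℝ)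
    (Δ : ℝ) (hΔ : 0 < Δ)
    (hpos : ∀ x : Fin d → ℝ, euclNorm (x - xj) ≤ Δ →
      (∀ y : Fin d → ℝ, euclNorm (y - xj) ≤ Δ →
        mahalDistToHyperplane Shat μhat y ≤ mahalDistToHyperplane Shat μhat x) →
      0 < x ⬝ᵥ μhat) :
    { x : Fin d → ℝ | euclNorm (x - xj) ≤ Δ ∧
        ∀ y : Fin d → ℝ, euclNorm (y - xj) ≤ Δ →
          mahalDistToHyperplane Shat μhat y ≤ mahalDistToHyperplane Shat μhat x } =
    { x : Fin d → ℝ | euclNorm (x - xj) ≤ Δ ∧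
        ∀ y : Fin d → ℝ, euclNorm (y - xj) ≤ Δ →
          (y ⬝ᵥ μhat) / Real.sqrt (y ⬝ᵥ (Shat *ᵥ y)) ≤
            (x ⬝ᵥ μhat) / Real.sqrt (x ⬝ᵥ (Shat *ᵥ x)) } :=
  maxmin_eq_fractional_program_general μhat Shat hShat xj Δ hΔ hpos
end
end
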